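/- Let p: E → [1,∞] and p': E → [1,∞] be measurable with 1/p(x) + 1/p'(x) = 1 a.e. If f ∈ L^{p(·)}(E) and g ∈ L^{p'(·)}(E), then fg ∈ L^1(E) and ∫_E |f g| dx ≤ 4‖f‖_{L^{p(·)}(E)}‖g‖_{L^{p'(·)}(E)}. -/

import Mathlib

open MeasureTheory ENNReal

/-!
Normalise `f` and `g` by numbers `u > ‖f‖` and `v > ‖g‖`, so that both modulars are at most `1`.
Pointwise, Young's inequality `ab ≤ a^p + b^{p'}` holds where `p, p' < ∞`; where `p = ∞` we have
`p' = 1` and the normalised `f` is at most `1` a.e., so `ab ≤ b = b^{p'}` (symmetrically where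
`p' = ∞`). Integrating, `∫_E |fg| / (uv)` is bounded by the sum of the two integral parts of the
modulars, hence by `2`; letting `u, v` decrease to the norms gives the bound with constant `2`.
-/

/-- The variable Lebesgue norm `‖f‖_{L^{p(·)}(E)}` for an exponent function
`p : E → [1,∞]`, with modular
`ρ(h) = ∫_{E∖E_∞} |h|^{p(x)} dx + ‖h‖_{L^∞(E_∞)}` where `E_∞ = {p = ∞}`. -/
noncomputable def vNormE {d : ℕ} (E : Set (EuclideanSpace ℝ (Fin d)))
    (p : EuclideanSpace ℝ (Fin d) → ℝ≥0∞)
    (f : EuclideanSpace ℝ (Fin d) → ℝ) : ℝ≥0∞ :=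
  sInf {t : ℝ≥0∞ | 0 < t ∧
    (∫⁻ x in E ∩ {x | p x ≠ ⊤}, ((‖f x‖₊ : ℝ≥0∞) / t) ^ (p x).toReal) +
      essSup (fun x => (‖f x‖₊ : ℝ≥0∞) / t)
        (volume.restrict (E ∩ {x | p x = ⊤})) ≤ 1}

variable {α : Type*} [MeasurableSpace α] {μ : Measure α} {E : Set α} {p p' : α → ℝ≥0∞}

noncomputable def varModular (μ : Measure α) (E : Set α) (p : α → ℝ≥0∞) (F : α → ℝ≥0∞) :
    ℝ≥0∞ :=
  (∫⁻ x in E ∩ {x | p x ≠ ⊤}, F x ^ (p x).toReal ∂μ) + essSup F (μ.restrict (E ∩ {x | p x = ⊤}))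

lemma vNormE_eq_sInf_varModular {d : ℕ} (E : Set (EuclideanSpace ℝ (Fin d)))
    (p : EuclideanSpace ℝ (Fin d) → ℝ≥0∞) (f : EuclideanSpace ℝ (Fin d) → ℝ) :
    vNormE E p f = sInf {t | 0 < t ∧ varModular volume E p (fun x => ‖f x‖₊ / t) ≤ 1} :=
  rfl

lemma varModular_mono {F G : α → ℝ≥0∞} (hFG : F ≤ G) :
    varModular μ E p F ≤ varModular μ E p G :=
  add_le_add (lintegral_mono fun x => rpow_le_rpow (hFG x) toReal_nonneg)
    (essSup_mono_ae (.of_forall hFG))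

lemma varModular_le_one_of_vNormE_lt {d : ℕ} {E : Set (EuclideanSpace ℝ (Fin d))}
    {p : EuclideanSpace ℝ (Fin d) → ℝ≥0∞} {f : EuclideanSpace ℝ (Fin d) → ℝ} {t : ℝ≥0∞}
    (ht : vNormE E p f < t) : varModular volume E p (fun x => ‖f x‖₊ / t) ≤ 1 := by
  rw [vNormE_eq_sInf_varModular] at ht
  obtain ⟨s, ⟨-, hs⟩, hst⟩ := sInf_lt_iff.mp ht
  exact (varModular_mono fun x => ENNReal.div_le_div_left hst.le _).trans hs

lemma ae_restrict_le_one_of_varModular_le_one {F : α → ℝ≥0∞} (hp : Measurable p)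
    (hF : varModular μ E p F ≤ 1) : ∀ᵐ x ∂μ.restrict E, p x = ⊤ → F x ≤ 1 := by
  have hmeas : MeasurableSet {x | p x = ⊤} := hp (measurableSet_singleton ⊤)
  have hess : ∀ᵐ x ∂(μ.restrict E).restrict {x | p x = ⊤}, F x ≤ 1 := by
    rw [Measure.restrict_restrict hmeas, Set.inter_comm]
    exact (ae_le_essSup F).mono fun x hx => hx.trans (le_add_self.trans hF)
  exact (ae_restrict_iff' hmeas).mp hess

lemma ENNReal.mul_le_rpow_add_rpow {q q' : ℝ≥0∞} [q.HolderConjugate q'] (hq : q ≠ ⊤)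
    (hq' : q' ≠ ⊤) (a b : ℝ≥0∞) : a * b ≤ a ^ q.toReal + b ^ q'.toReal := by
  have hqq' := HolderConjugate.toReal_of_ne_top hq hq'
  have hdiv : ∀ {r : ℝ} (c : ℝ≥0∞), 1 < r → c / ENNReal.ofReal r ≤ c := fun c hr =>
    ENNReal.div_le_of_le_mul (le_mul_of_one_le_right zero_le (one_le_ofReal.2 hr.le))
  exact (young_inequality a b hqq').trans (add_le_add (hdiv _ hqq'.lt) (hdiv _ hqq'.symm.lt))

lemma ENNReal.mul_le_of_inv_add_inv_eq_one {q q' a b : ℝ≥0∞} (h : q⁻¹ + q'⁻¹ = 1)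
    (ha : q = ⊤ → a ≤ 1) (hb : q' = ⊤ → b ≤ 1) :
    a * b ≤ (if q ≠ ⊤ then a ^ q.toReal else 0) + (if q' ≠ ⊤ then b ^ q'.toReal else 0) := by
  have : q.HolderConjugate q' := holderConjugate_iff.2 h
  by_cases hq : q = ⊤
  · have hq' : q' = 1 := (HolderConjugate.eq_top_iff_eq_one q q').1 hq
    simpa [hq, hq'] using mul_le_of_le_one_left zero_le (ha hq)
  by_cases hq' : q' = ⊤
  · have hq1 : q = 1 := (HolderConjugate.eq_top_iff_eq_one q' q).1 hq'
    simpa [hq', hq1] using mul_le_of_le_one_right zero_le (hb hq')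
  simpa [hq, hq'] using mul_le_rpow_add_rpow hq hq' a b

theorem lintegral_mul_le_two_of_varModular_le_one {F G : α → ℝ≥0∞} (hp : Measurable p)
    (hp' : Measurable p') (hconj : ∀ᵐ x ∂μ.restrict E, (p x)⁻¹ + (p' x)⁻¹ = 1)
    (hF : Measurable F) (hFm : varModular μ E p F ≤ 1) (hGm : varModular μ E p' G ≤ 1) :
    ∫⁻ x in E, F x * G x ∂μ ≤ 2 := by
  have hfin : MeasurableSet {x | p x ≠ ⊤} := (hp (measurableSet_singleton ⊤)).compl
  have hfin' : MeasurableSet {x | p' x ≠ ⊤} := (hp' (measurableSet_singleton ⊤)).compl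
  have hpt : ∀ᵐ x ∂μ.restrict E, F x * G x ≤
      {x | p x ≠ ⊤}.indicator (fun x => F x ^ (p x).toReal) x +
        {x | p' x ≠ ⊤}.indicator (fun x => G x ^ (p' x).toReal) x := by
    filter_upwards [hconj, ae_restrict_le_one_of_varModular_le_one hp hFm,
      ae_restrict_le_one_of_varModular_le_one hp' hGm] with x hx hFx hGx
    simpa only [Set.indicator_apply, Set.mem_ofPred_eq]
      using mul_le_of_inv_add_inv_eq_one hx hFx hGx
  calc ∫⁻ x in E, F x * G x ∂μ
      ≤ ∫⁻ x in E, ({x | p x ≠ ⊤}.indicator (fun x => F x ^ (p x).toReal) x +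
          {x | p' x ≠ ⊤}.indicator (fun x => G x ^ (p' x).toReal) x) ∂μ := lintegral_mono_ae hpt
    _ = (∫⁻ x in E ∩ {x | p x ≠ ⊤}, F x ^ (p x).toReal ∂μ) +
          ∫⁻ x in E ∩ {x | p' x ≠ ⊤}, G x ^ (p' x).toReal ∂μ := by
      rw [lintegral_add_left ((hF.pow hp.ennreal_toReal).indicator hfin),
        lintegral_indicator hfin, lintegral_indicator hfin', Measure.restrict_restrict hfin,
        Measure.restrict_restrict hfin', Set.inter_comm, Set.inter_comm {x | p' x ≠ ⊤}]
    _ ≤ 1 + 1 := add_le_add (le_self_add.trans hFm) (le_self_add.trans hGm)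
    _ = 2 := one_add_one_eq_two

theorem lintegral_nnnorm_mul_le_of_varModular_le_one (hp : Measurable p) (hp' : Measurable p')
    (hconj : ∀ᵐ x ∂μ.restrict E, (p x)⁻¹ + (p' x)⁻¹ = 1) {f g : α → ℝ} (hf : Measurable f)
    {u v : ℝ≥0∞} (hu : u ≠ 0) (hv : v ≠ 0)
    (hfu : varModular μ E p (fun x => ‖f x‖₊ / u) ≤ 1)
    (hgv : varModular μ E p' (fun x => ‖g x‖₊ / v) ≤ 1) :
    ∫⁻ x in E, ‖f x * g x‖₊ ∂μ ≤ 2 * (u * v) := by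
  by_cases huv : u = ⊤ ∨ v = ⊤
  · rcases huv with rfl | rfl <;> simp [hu, hv]
  push Not at huv
  calc ∫⁻ x in E, ‖f x * g x‖₊ ∂μ
      = ∫⁻ x in E, u * v * ((‖f x‖₊ / u) * (‖g x‖₊ / v)) ∂μ := by
        refine lintegral_congr fun x => ?_
        rw [nnnorm_mul, coe_mul, mul_mul_mul_comm, ENNReal.mul_div_cancel hu huv.1,
          ENNReal.mul_div_cancel hv huv.2]
    _ = u * v * ∫⁻ x in E, (‖f x‖₊ / u) * (‖g x‖₊ / v) ∂μ :=
        lintegral_const_mul' _ _ (mul_ne_top huv.1 huv.2)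
    _ ≤ u * v * 2 := by
        gcongr
        exact lintegral_mul_le_two_of_varModular_le_one hp hp' hconj
          (hf.nnnorm.coe_nnreal_ennreal.div_const u) hfu hgv
    _ = 2 * (u * v) := mul_comm _ _

theorem stmt17_general {d : ℕ} (E : Set (EuclideanSpace ℝ (Fin d)))
    (p p' : EuclideanSpace ℝ (Fin d) → ℝ≥0∞)
    (hp : Measurable p) (hp' : Measurable p')
    (hconj : ∀ᵐ x ∂(volume.restrict E), (p x)⁻¹ + (p' x)⁻¹ = 1)
    (f g : EuclideanSpace ℝ (Fin d) → ℝ) (hf : Measurable f) (hg : Measurable g)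
    (hfLp : vNormE E p f < ⊤) (hgLp : vNormE E p' g < ⊤) :
    IntegrableOn (fun x => f x * g x) E volume ∧
      ∫⁻ x in E, ‖f x * g x‖₊ ≤ 4 * vNormE E p f * vNormE E p' g := by
  have hhalf : (∫⁻ x in E, ‖f x * g x‖₊) / 2 ≤ vNormE E p f * vNormE E p' g :=
    ENNReal.le_mul_of_forall_lt (.inr hgLp.ne) (.inl hfLp.ne) fun u hu v hv =>
      div_le_of_le_mul' <| lintegral_nnnorm_mul_le_of_varModular_le_one hp hp' hconj hf
        (pos_of_gt hu).ne' (pos_of_gt hv).ne'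
        (varModular_le_one_of_vNormE_lt hu) (varModular_le_one_of_vNormE_lt hv)
  have hbound : ∫⁻ x in E, ‖f x * g x‖₊ ≤ 2 * (vNormE E p f * vNormE E p' g) := by
    rwa [ENNReal.div_le_iff_le_mul (.inl two_ne_zero) (.inl ofNat_ne_top), mul_comm] at hhalf
  refine ⟨⟨(hf.mul hg).aestronglyMeasurable, hbound.trans_lt ?_⟩, hbound.trans ?_⟩
  · exact mul_lt_top ofNat_lt_top (mul_lt_top hfLp hgLp)
  · rw [mul_assoc]
    gcongr
    norm_num

/-- Hölder's inequality for variable exponents: if `1/p(x) + 1/p'(x) = 1` a.e.,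
`f ∈ L^{p(·)}(E)` and `g ∈ L^{p'(·)}(E)`, then `fg ∈ L¹(E)` and
`∫_E |fg| dx ≤ 4 ‖f‖_{L^{p(·)}(E)} ‖g‖_{L^{p'(·)}(E)}`. -/
theorem stmt17 {d : ℕ} (E : Set (EuclideanSpace ℝ (Fin d))) (hE : MeasurableSet E)
    (p p' : EuclideanSpace ℝ (Fin d) → ℝ≥0∞)
    (hp : Measurable p) (hp' : Measurable p')
    (hconj : ∀ᵐ x ∂(volume.restrict E), (p x)⁻¹ + (p' x)⁻¹ = 1)
    (f g : EuclideanSpace ℝ (Fin d) → ℝ) (hf : Measurable f) (hg : Measurable g)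
    (hfLp : vNormE E p f < ⊤) (hgLp : vNormE E p' g < ⊤) :
    IntegrableOn (fun x => f x * g x) E volume ∧
      ∫⁻ x in E, ‖f x * g x‖₊ ≤ 4 * vNormE E p f * vNormE E p' g :=
  stmt17_general E p p' hp hp' hconj f g hf hg hfLp hgLp
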